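/- Let V₁, V₂, V₃ ⊆ k⁴ be 2-dimensional linear subspaces with V_i ∩ V_j = {0} for i ≠ j, and let w₀, w₁, w₂, w₃ ∈ k⁴ be nonzero vectors that span k⁴. Assume that for each l ∈ {1,2,3}, the only homogeneous polynomial of degree 2 vanishing on both subspaces V_p with p ≠ l and at all four vectors w₀, …, w₃ is the zero polynomial. Then for each l ∈ {1,2,3} and each i ∈ {0,1,2,3} there exists a homogeneous polynomial q of degree 2 vanishing on both subspaces V_p with p ≠ l and at the three vectors w_j with j ≠ i, and satisfying q(w_i) ≠ 0 (a quadric surface containing the two lines L_p, p ≠ l, and the three points P_j, j ≠ i, but not the point P_i). -/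

import Mathlib

/-!
Quadrics in `ℙ³` form a vector space of dimension `10`. Restricting a quadric to a line gives a
binary quadratic form, so containing a line is `3` linear conditions, and containing a point is
one. Hence `2 · 3 + 3 < 10` and some nonzero quadric contains the two lines and three of the
points; by hypothesis it cannot also contain the fourth point.
-/

open MvPolynomial Module

namespace MvPolynomial

theorem finrank_homogeneousSubmodule {σ R : Type*} [Fintype σ] [CommSemiring R]
    [StrongRankCondition R] (n : ℕ) :
    finrank R (homogeneousSubmodule σ R n) = (Fintype.card σ).multichoose n := by
  classical
  have hdeg : {d : σ →₀ ℕ | d.degree = n} =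
      ((Finset.univ : Finset σ).finsuppAntidiag n : Set (σ →₀ ℕ)) := by
    ext d
    simp [Finset.mem_finsuppAntidiag, Finsupp.degree_eq_sum]
  rw [homogeneousSubmodule_eq_finsupp_supported,
    (AddMonoidAlgebra.supportedEquivFinsupp _).finrank_eq, hdeg, finrank_finsupp_self]
  simp [Finset.card_finsuppAntidiag_nat_eq_multichoose]

section LinearSubst

variable {R σ ι : Type*} [CommSemiring R] [Fintype ι]

noncomputable def linearSubst (b : ι → σ → R) (t : σ) : MvPolynomial ι R :=
  ∑ s, C (b s t) * X s

theorem isHomogeneous_linearSubst (b : ι → σ → R) (t : σ) : (linearSubst b t).IsHomogeneous 1 :=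
  IsHomogeneous.sum _ _ _ fun _ _ => isHomogeneous_C_mul_X _ _

theorem eval_aeval_linearSubst (b : ι → σ → R) (q : MvPolynomial σ R) (c : ι → R) :
    eval c (aeval (linearSubst b) q) = eval (∑ s, c s • b s) q := by
  change aeval c (aeval (linearSubst b) q) = aeval (∑ s, c s • b s) q
  rw [aeval_eq_bind₁, aeval_bind₁]
  congr 1
  ext t
  simp [linearSubst, mul_comm]

theorem isHomogeneous_aeval_linearSubst {q : MvPolynomial σ R} {n : ℕ} (hq : q.IsHomogeneous n)
    (b : ι → σ → R) : (aeval (linearSubst b) q).IsHomogeneous n := by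
  simpa using hq.aeval (linearSubst b) (isHomogeneous_linearSubst b)

noncomputable def homogeneousLinearSubst (b : ι → σ → R) (n : ℕ) :
    homogeneousSubmodule σ R n →ₗ[R] homogeneousSubmodule ι R n :=
  (aeval (linearSubst b)).toLinearMap.restrict fun _ hq => isHomogeneous_aeval_linearSubst hq b

theorem eval_eq_zero_of_homogeneousLinearSubst_eq_zero {b : ι → σ → R} {n : ℕ}
    {q : homogeneousSubmodule σ R n} (hq : homogeneousLinearSubst b n q = 0) {v : σ → R}
    (hv : v ∈ Submodule.span R (Set.range b)) : eval v (q : MvPolynomial σ R) = 0 := by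
  obtain ⟨c, rfl⟩ := (Submodule.mem_span_range_iff_exists_fun R).mp hv
  have hq' : aeval (linearSubst b) (q : MvPolynomial σ R) = 0 := congrArg Subtype.val hq
  rw [← eval_aeval_linearSubst, hq', map_zero]

end LinearSubst

instance {R σ : Type*} [CommSemiring R] [Finite σ] (n : ℕ) :
    Module.Finite R (homogeneousSubmodule σ R n) :=
  Module.Finite.iff_fg.mpr (homogeneousSubmodule_fg σ R n)

theorem exists_isHomogeneous_ne_zero_eval_eq_zero {K σ ι κ : Type*} [Field K] [Fintype σ]
    [Fintype ι] [Fintype κ] (n : ℕ) (V : ι → Submodule K (σ → K)) (w : κ → σ → K)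
    (hcount : ∑ p, (finrank K (V p)).multichoose n + Fintype.card κ <
      (Fintype.card σ).multichoose n) :
    ∃ q : MvPolynomial σ K, q.IsHomogeneous n ∧ q ≠ 0 ∧
      (∀ p, ∀ v ∈ V p, eval v q = 0) ∧ ∀ j, eval (w j) q = 0 := by
  let basis (p : ι) (s : Fin (finrank K (V p))) : σ → K := finBasis K (V p) s
  let conditions : homogeneousSubmodule σ K n →ₗ[K]
      (∀ p, homogeneousSubmodule (Fin (finrank K (V p))) K n) × (κ → K) :=
    (LinearMap.pi fun p => homogeneousLinearSubst (basis p) n).prod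
      (LinearMap.pi fun j => (aeval (w j)).toLinearMap ∘ₗ (homogeneousSubmodule σ K n).subtype)
  have hker : LinearMap.ker conditions ≠ ⊥ := LinearMap.ker_ne_bot_of_finrank_lt <| by
    simpa [finrank_prod, finrank_pi_fintype, finrank_homogeneousSubmodule] using hcount
  obtain ⟨q, hq, hq0⟩ := Submodule.exists_mem_ne_zero_of_ne_bot hker
  have hrestrict (p : ι) : homogeneousLinearSubst (basis p) n q = 0 :=
    congrFun (congrArg Prod.fst hq) p
  have hpoints (j : κ) : eval (w j) (q : MvPolynomial σ K) = 0 :=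
    congrFun (congrArg Prod.snd hq) j
  refine ⟨q, q.2, by simpa using hq0, fun p v hv => ?_, hpoints⟩
  refine eval_eq_zero_of_homogeneousLinearSubst_eq_zero (hrestrict p) ?_
  have hsum := congrArg Subtype.val ((finBasis K (V p)).sum_repr ⟨v, hv⟩)
  simp only [Submodule.coe_sum, Submodule.coe_smul] at hsum
  exact (Submodule.mem_span_range_iff_exists_fun K).mpr ⟨_, hsum⟩

end MvPolynomial

theorem stmt_8_general {k : Type*} [Field k]
    (V : Fin 3 → Submodule k (Fin 4 → k))
    (hVdim : ∀ p, Module.finrank k (V p) = 2)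
    (w : Fin 4 → (Fin 4 → k))
    (hres : ∀ l : Fin 3, ∀ q : MvPolynomial (Fin 4) k, q.IsHomogeneous 2 →
      (∀ p : Fin 3, p ≠ l → ∀ v ∈ V p, eval v q = 0) →
      (∀ i, eval (w i) q = 0) → q = 0) :
    ∀ (l : Fin 3) (i : Fin 4), ∃ q : MvPolynomial (Fin 4) k, q.IsHomogeneous 2 ∧
      (∀ p : Fin 3, p ≠ l → ∀ v ∈ V p, eval v q = 0) ∧
      (∀ j : Fin 4, j ≠ i → eval (w j) q = 0) ∧ eval (w i) q ≠ 0 := by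
  intro l i
  obtain ⟨q, hq, hq0, hlines, hpoints⟩ := exists_isHomogeneous_ne_zero_eval_eq_zero 2
    (fun p : {p // p ≠ l} => V p) (fun j : {j // j ≠ i} => w j)
    (by simp [hVdim, Nat.multichoose_eq, Nat.choose])
  have hlines' : ∀ p : Fin 3, p ≠ l → ∀ v ∈ V p, eval v q = 0 := fun p hp => hlines ⟨p, hp⟩
  have hpoints' : ∀ j : Fin 4, j ≠ i → eval (w j) q = 0 := fun j hj => hpoints ⟨j, hj⟩
  refine ⟨q, hq, hlines', hpoints', fun hwi => hq0 (hres l q hq hlines' fun j => ?_)⟩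
  by_cases hj : j = i
  · exact hj ▸ hwi
  · exact hpoints' j hj

/-- Under the independence hypothesis, for each line `L_l` and each point `P_i`
there is a quadric through the two lines `L_p`, `p ≠ l`, and the three points
`P_j`, `j ≠ i`, missing `P_i`. -/
theorem stmt_8 {k : Type*} [Field k] [IsAlgClosed k] [CharZero k]
    (V : Fin 3 → Submodule k (Fin 4 → k))
    (hVdim : ∀ p, Module.finrank k (V p) = 2)
    (hVdisj : ∀ p q : Fin 3, p ≠ q → V p ⊓ V q = ⊥)
    (w : Fin 4 → (Fin 4 → k))
    (hw0 : ∀ i, w i ≠ 0)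
    (hwspan : Submodule.span k (Set.range w) = ⊤)
    (hres : ∀ l : Fin 3, ∀ q : MvPolynomial (Fin 4) k, q.IsHomogeneous 2 →
      (∀ p : Fin 3, p ≠ l → ∀ v ∈ V p, eval v q = 0) →
      (∀ i, eval (w i) q = 0) → q = 0) :
    ∀ (l : Fin 3) (i : Fin 4), ∃ q : MvPolynomial (Fin 4) k, q.IsHomogeneous 2 ∧
      (∀ p : Fin 3, p ≠ l → ∀ v ∈ V p, eval v q = 0) ∧
      (∀ j : Fin 4, j ≠ i → eval (w j) q = 0) ∧ eval (w i) q ≠ 0 :=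
  stmt_8_general V hVdim w hres
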